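/- The singular value thresholding operator is non-expansive: for any τ > 0 and real m × n matrices A, B, ‖D_τ(A) - D_τ(B)‖_F ≤ ‖A - B‖_F. -/

import Mathlib

open Matrix BigOperators

noncomputable def singVal {m n : ℕ} (M : Matrix (Fin m) (Fin n) ℝ) (i : Fin n) : ℝ :=
  Real.sqrt ((Matrix.isHermitian_conjTranspose_mul_self M).eigenvalues i)

noncomputable def nuclearNorm {m n : ℕ} (M : Matrix (Fin m) (Fin n) ℝ) : ℝ :=
  ∑ i, singVal M i

noncomputable def frobNorm {m n : ℕ} (M : Matrix (Fin m) (Fin n) ℝ) : ℝ :=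
  Real.sqrt (Matrix.trace (Mᵀ * M))

noncomputable def finner {m n : ℕ} (A B : Matrix (Fin m) (Fin n) ℝ) : ℝ :=
  Matrix.trace (Aᵀ * B)

noncomputable def opNorm {m n : ℕ} (M : Matrix (Fin m) (Fin n) ℝ) : ℝ :=
  ‖LinearMap.toContinuousLinearMap (Matrix.toEuclideanLin M)‖

/-!
Write `D_A = D_τ(A)`. For `A = U diag(σ) Vᵀ` the residual `A - D_A = U diag(min(σ, τ)) Vᵀ` has all
singular values at most `τ`, so `⟪A - D_A, D'⟫ ≤ τ ‖D'‖_*` for every `D'`, with equality `τ ‖D_A‖_*`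
at `D' = D_A`; that is, `(A - D_A)/τ` is a subgradient of the nuclear norm at `D_A`. Adding the two
subgradient inequalities for `A` and `B` gives `⟪(A - D_A) - (B - D_B), D_A - D_B⟫ ≥ 0`, and
Cauchy–Schwarz turns this firm non-expansiveness into `‖D_A - D_B‖_F ≤ ‖A - B‖_F`.
-/

open scoped InnerProductSpace

theorem norm_sub_le_of_inner_add_inner_nonpos {E : Type*} [NormedAddCommGroup E]
    [InnerProductSpace ℝ E] {a b x y : E} (h : ⟪a - x, y - x⟫_ℝ + ⟪b - y, x - y⟫_ℝ ≤ 0) :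
    ‖x - y‖ ≤ ‖a - b‖ := by
  have hsplit : ⟪a - x, y - x⟫_ℝ + ⟪b - y, x - y⟫_ℝ = ‖x - y‖ ^ 2 - ⟪a - b, x - y⟫_ℝ := by
    rw [← real_inner_self_eq_norm_sq]
    simp only [inner_sub_left, inner_sub_right, real_inner_comm]
    ring
  have hsq : ‖x - y‖ ^ 2 ≤ ‖a - b‖ * ‖x - y‖ := by
    linarith [real_inner_le_norm (a - b) (x - y)]
  nlinarith [norm_nonneg (a - b), norm_nonneg (x - y)]

theorem sub_max_sub_zero_eq_min (x τ : ℝ) : x - max (x - τ) 0 = min x τ := by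
  rcases le_total x τ with h | h
  · rw [max_eq_right (by linarith), min_eq_left h, sub_zero]
  · rw [max_eq_left (by linarith), min_eq_right h, sub_sub_cancel]

theorem min_mul_max_sub_zero (x τ : ℝ) : min x τ * max (x - τ) 0 = τ * max (x - τ) 0 := by
  rcases le_total x τ with h | h
  · rw [max_eq_right (by linarith), mul_zero, mul_zero]
  · rw [min_eq_right h]

theorem sum_mul_mul_le_of_abs_le {ι : Type*} [Fintype ι] {τ : ℝ} (hτ : 0 ≤ τ) {c x y : ι → ℝ}
    (hc : ∀ i, |c i| ≤ τ) (hx : ∑ i, x i ^ 2 ≤ 1) (hy : ∑ i, y i ^ 2 ≤ 1) :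
    ∑ i, c i * (x i * y i) ≤ τ := by
  have hterm : ∀ i, c i * (x i * y i) ≤ τ / 2 * (x i ^ 2 + y i ^ 2) := fun i => by
    obtain ⟨hlo, hhi⟩ := abs_le.mp (hc i)
    -- `2τ(x² + y²) - 4cxy = (τ - c)(x + y)² + (τ + c)(x - y)²`
    nlinarith [mul_nonneg (sub_nonneg.mpr hhi) (sq_nonneg (x i + y i)),
      mul_nonneg (neg_le_iff_add_nonneg.mp hlo) (sq_nonneg (x i - y i))]
  calc ∑ i, c i * (x i * y i) ≤ ∑ i, τ / 2 * (x i ^ 2 + y i ^ 2) :=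
        Finset.sum_le_sum fun i _ => hterm i
    _ = τ / 2 * (∑ i, x i ^ 2 + ∑ i, y i ^ 2) := by
        rw [← Finset.mul_sum, Finset.sum_add_distrib]
    _ ≤ τ := by nlinarith

section Frobenius

variable {m n : ℕ}

def flatten (M : Matrix (Fin m) (Fin n) ℝ) : EuclideanSpace ℝ (Fin m × Fin n) :=
  WithLp.toLp 2 fun p => M p.1 p.2

theorem flatten_sub (A B : Matrix (Fin m) (Fin n) ℝ) :
    flatten (A - B) = flatten A - flatten B :=
  rfl

theorem finner_eq_inner (A B : Matrix (Fin m) (Fin n) ℝ) :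
    finner A B = ⟪flatten A, flatten B⟫_ℝ := by
  simp only [finner, trace, diag_apply, mul_apply, transpose_apply, flatten,
    EuclideanSpace.inner_eq_star_dotProduct, dotProduct, Pi.star_apply, star_trivial, mul_comm,
    Fintype.sum_prod_type]
  exact Finset.sum_comm

theorem frobNorm_eq_norm_flatten (M : Matrix (Fin m) (Fin n) ℝ) : frobNorm M = ‖flatten M‖ := by
  rw [frobNorm, ← finner, finner_eq_inner, real_inner_self_eq_norm_sq,
    Real.sqrt_sq (norm_nonneg _)]

theorem finner_sub_right (A B C : Matrix (Fin m) (Fin n) ℝ) :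
    finner A (B - C) = finner A B - finner A C := by
  simp only [finner, Matrix.mul_sub, trace_sub]

end Frobenius

section SVD

variable {m n r s : ℕ}

theorem finner_svd (U : Matrix (Fin m) (Fin r) ℝ) (V : Matrix (Fin n) (Fin r) ℝ)
    (U' : Matrix (Fin m) (Fin s) ℝ) (V' : Matrix (Fin n) (Fin s) ℝ) (c : Fin r → ℝ)
    (t : Fin s → ℝ) :
    finner (U * diagonal c * Vᵀ) (U' * diagonal t * V'ᵀ) =
      ∑ j, t j * ∑ i, c i * ((Uᵀ * U') i j * (Vᵀ * V') i j) := by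
  have h : (U * diagonal c * Vᵀ)ᵀ * (U' * diagonal t * V'ᵀ) =
      V * (diagonal c * (Uᵀ * U') * diagonal t * V'ᵀ) := by
    simp only [transpose_mul, transpose_transpose, diagonal_transpose, Matrix.mul_assoc]
  rw [finner, h, trace_mul_comm, Matrix.mul_assoc _ V'ᵀ, ← transpose_transpose V,
    ← transpose_mul, transpose_transpose, ← sum_hadamard_eq]
  simp only [hadamard_apply, mul_diagonal, diagonal_mul, Finset.mul_sum]
  rw [Finset.sum_comm]
  refine Finset.sum_congr rfl fun j _ => Finset.sum_congr rfl fun i _ => ?_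
  ring

theorem finner_svd_self {U : Matrix (Fin m) (Fin r) ℝ} {V : Matrix (Fin n) (Fin r) ℝ}
    (hU : Uᵀ * U = 1) (hV : Vᵀ * V = 1) (c t : Fin r → ℝ) :
    finner (U * diagonal c * Vᵀ) (U * diagonal t * Vᵀ) = ∑ i, c i * t i := by
  simp [finner_svd, hU, hV, one_apply, mul_comm]

theorem transpose_mul_self_apply_self {p : ℕ} (A : Matrix (Fin p) (Fin s) ℝ) (j : Fin s) :
    (Aᵀ * A) j j = ∑ k, A k j ^ 2 := by
  simp only [mul_apply, transpose_apply, sq]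

theorem sum_sq_transpose_mul_apply_le {U : Matrix (Fin m) (Fin r) ℝ} (hU : Uᵀ * U = 1)
    (W : Matrix (Fin m) (Fin s) ℝ) (j : Fin s) :
    ∑ i, (Uᵀ * W) i j ^ 2 ≤ (Wᵀ * W) j j := by
  -- the part of `W` orthogonal to the column space of `U`
  set R := W - U * (Uᵀ * W)
  have hR : Rᵀ * R = Wᵀ * W - (Uᵀ * W)ᵀ * (Uᵀ * W) := by
    have hUU : Uᵀ * (U * (Uᵀ * W)) = Uᵀ * W := by rw [← Matrix.mul_assoc, hU, Matrix.one_mul]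
    simp only [R, transpose_sub, transpose_mul, transpose_transpose, Matrix.sub_mul,
      Matrix.mul_sub, Matrix.mul_assoc, hUU]
    abel
  have hdiag := congrFun (congrFun hR j) j
  rw [Matrix.sub_apply, transpose_mul_self_apply_self R] at hdiag
  rw [← transpose_mul_self_apply_self (Uᵀ * W)]
  linarith [Finset.sum_nonneg fun k (_ : k ∈ Finset.univ) => sq_nonneg (R k j)]

theorem finner_svd_le {τ : ℝ} (hτ : 0 ≤ τ) {U : Matrix (Fin m) (Fin r) ℝ}
    {V : Matrix (Fin n) (Fin r) ℝ} {U' : Matrix (Fin m) (Fin s) ℝ} {V' : Matrix (Fin n) (Fin s) ℝ}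
    (hU : Uᵀ * U = 1) (hV : Vᵀ * V = 1) (hU' : U'ᵀ * U' = 1) (hV' : V'ᵀ * V' = 1)
    {c : Fin r → ℝ} (hc : ∀ i, |c i| ≤ τ) {t : Fin s → ℝ} (ht : ∀ j, 0 ≤ t j) :
    finner (U * diagonal c * Vᵀ) (U' * diagonal t * V'ᵀ) ≤ τ * ∑ j, t j := by
  rw [finner_svd, Finset.mul_sum]
  refine Finset.sum_le_sum fun j _ => ?_
  have hUcol := sum_sq_transpose_mul_apply_le hU U' j
  have hVcol := sum_sq_transpose_mul_apply_le hV V' j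
  rw [hU', one_apply_eq] at hUcol
  rw [hV', one_apply_eq] at hVcol
  rw [mul_comm τ]
  exact mul_le_mul_of_nonneg_left (sum_mul_mul_le_of_abs_le hτ hc hUcol hVcol) (ht j)

theorem finner_sub_svt_le {τ : ℝ} (hτ : 0 ≤ τ) {U : Matrix (Fin m) (Fin r) ℝ}
    {V : Matrix (Fin n) (Fin r) ℝ} {U' : Matrix (Fin m) (Fin s) ℝ} {V' : Matrix (Fin n) (Fin s) ℝ}
    (hU : Uᵀ * U = 1) (hV : Vᵀ * V = 1) (hU' : U'ᵀ * U' = 1) (hV' : V'ᵀ * V' = 1)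
    {σ : Fin r → ℝ} (hσ : ∀ i, 0 ≤ σ i) {t : Fin s → ℝ} (ht : ∀ j, 0 ≤ t j) :
    finner (U * diagonal σ * Vᵀ - U * diagonal (fun i => max (σ i - τ) 0) * Vᵀ)
        (U' * diagonal t * V'ᵀ - U * diagonal (fun i => max (σ i - τ) 0) * Vᵀ) ≤
      τ * (∑ j, t j - ∑ i, max (σ i - τ) 0) := by
  have hres : U * diagonal σ * Vᵀ - U * diagonal (fun i => max (σ i - τ) 0) * Vᵀ =
      U * diagonal (fun i => min (σ i) τ) * Vᵀ := by
    rw [← Matrix.sub_mul, ← Matrix.mul_sub, diagonal_sub]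
    simp only [sub_max_sub_zero_eq_min]
  have hcross := finner_svd_le hτ hU hV hU' hV'
    (fun i => abs_le.mpr ⟨by linarith [le_min (hσ i) hτ], min_le_right _ _⟩) ht
  rw [hres, finner_sub_right, finner_svd_self hU hV]
  simp only [min_mul_max_sub_zero, ← Finset.mul_sum]
  linarith

end SVD

/-- The SVT operator is non-expansive in Frobenius norm. -/
theorem svt_nonexpansive {m n rA rB : ℕ} (τ : ℝ) (hτ : 0 < τ)
    (A B : Matrix (Fin m) (Fin n) ℝ)
    (UA : Matrix (Fin m) (Fin rA) ℝ) (VA : Matrix (Fin n) (Fin rA) ℝ) (σA : Fin rA → ℝ)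
    (hUA : UAᵀ * UA = 1) (hVA : VAᵀ * VA = 1) (hσA : ∀ i, 0 ≤ σA i)
    (hA : A = UA * Matrix.diagonal σA * VAᵀ)
    (UB : Matrix (Fin m) (Fin rB) ℝ) (VB : Matrix (Fin n) (Fin rB) ℝ) (σB : Fin rB → ℝ)
    (hUB : UBᵀ * UB = 1) (hVB : VBᵀ * VB = 1) (hσB : ∀ i, 0 ≤ σB i)
    (hB : B = UB * Matrix.diagonal σB * VBᵀ)
    (DA DB : Matrix (Fin m) (Fin n) ℝ)
    (hDA : DA = UA * Matrix.diagonal (fun i => max (σA i - τ) 0) * VAᵀ)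
    (hDB : DB = UB * Matrix.diagonal (fun i => max (σB i - τ) 0) * VBᵀ) :
    frobNorm (DA - DB) ≤ frobNorm (A - B) := by
  have hAB := finner_sub_svt_le hτ.le hUA hVA hUB hVB hσA
    (t := fun i => max (σB i - τ) 0) fun _ => le_max_right _ _
  have hBA := finner_sub_svt_le hτ.le hUB hVB hUA hVA hσB
    (t := fun i => max (σA i - τ) 0) fun _ => le_max_right _ _
  rw [← hA, ← hDA, ← hDB] at hAB
  rw [← hB, ← hDA, ← hDB] at hBA
  rw [frobNorm_eq_norm_flatten, frobNorm_eq_norm_flatten, flatten_sub, flatten_sub]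
  apply norm_sub_le_of_inner_add_inner_nonpos
  simp only [finner_eq_inner, flatten_sub] at hAB hBA
  linarith
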